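/- Fix an integer q with 1 ≤ q ≤ p − 1 and real numbers λ₁ ≥ λ₂ ≥ … ≥ λ_q ≥ c > 0 and λ_{q+1} = … = λ_p = 0. For each n let λ̂₁⁽ⁿ⁾ ≥ … ≥ λ̂_p⁽ⁿ⁾ ≥ 0 satisfy max_j |λ̂_j⁽ⁿ⁾ − λ_j| ≤ δ_n, and let c_n > 0. If δ_n → 0, c_n → 0, and δ_n²/c_n → 0 as n → ∞, then for all sufficiently large n the function j ↦ ((λ̂_{j+1}⁽ⁿ⁾)² + c_n)/((λ̂_j⁽ⁿ⁾)² + c_n) on {1, …, p − 1} attains its minimum uniquely at j = q. -/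
import Mathlib

open Filter Topology

set_option maxHeartbeats 1600000 in
/-- Deterministic core of the consistency of the minimum ridge-type eigenvalue ratio
estimator: if `λ₁ ≥ … ≥ λ_q ≥ c > 0`, `λ_{q+1} = … = λ_p = 0`, the estimates satisfy
`max_j |λ̂_j⁽ⁿ⁾ − λ_j| ≤ δ_n` with `δ_n → 0`, `c_n → 0` and `δ_n²/c_n → 0`, then
eventually `j ↦ ((λ̂_{j+1})² + c_n)/((λ̂_j)² + c_n)` on `{1,…,p−1}` is uniquely
minimized at `j = q`. -/
theorem mrer_unique_min (p q : ℕ) (hq1 : 1 ≤ q) (hqp : q ≤ p - 1)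
    (lam : ℕ → ℝ) (c : ℝ) (hc : 0 < c)
    (hmono : ∀ j, 1 ≤ j → j < q → lam (j + 1) ≤ lam j)
    (hlamq : c ≤ lam q)
    (hzero : ∀ j, q < j → j ≤ p → lam j = 0)
    (lamhat : ℕ → ℕ → ℝ) (δ cc : ℕ → ℝ)
    (hhatnn : ∀ n j, 1 ≤ j → j ≤ p → 0 ≤ lamhat n j)
    (hhatmono : ∀ n j, 1 ≤ j → j < p → lamhat n (j + 1) ≤ lamhat n j)
    (happrox : ∀ n j, 1 ≤ j → j ≤ p → |lamhat n j - lam j| ≤ δ n)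
    (hccpos : ∀ n, 0 < cc n)
    (hδ : Tendsto δ atTop (𝓝 0))
    (hcc : Tendsto cc atTop (𝓝 0))
    (hratio : Tendsto (fun n => δ n ^ 2 / cc n) atTop (𝓝 0)) :
    ∀ᶠ n in atTop, ∀ j, 1 ≤ j → j ≤ p - 1 → j ≠ q →
      (lamhat n (q + 1) ^ 2 + cc n) / (lamhat n q ^ 2 + cc n)
        < (lamhat n (j + 1) ^ 2 + cc n) / (lamhat n j ^ 2 + cc n) := by
  have hp2 : 2 ≤ p := by omega
  -- antitone chain for lamhat
  have hat_anti : ∀ n i j, 1 ≤ i → i ≤ j → j ≤ p → lamhat n j ≤ lamhat n i := by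
    intro n i j h1 hij hjp
    induction j with
    | zero => omega
    | succ k ih =>
      rcases Nat.eq_or_lt_of_le hij with h | h
      · rw [← h]
      · have hk1 : 1 ≤ k := by omega
        have hkp : k < p := by omega
        have h1 := hhatmono n k hk1 hkp
        have h2 := ih (by omega) (by omega)
        linarith
  -- antitone chain for lam on [1, q]
  have lam_anti : ∀ i j, 1 ≤ i → i ≤ j → j ≤ q → lam j ≤ lam i := by
    intro i j h1 hij hjq
    induction j with
    | zero => omega
    | succ k ih =>
      rcases Nat.eq_or_lt_of_le hij with h | h
      · rw [← h]
      · have h1 := hmono k (by omega) (by omega)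
        have h2 := ih (by omega) (by omega)
        linarith
  have hlam1 : c ≤ lam 1 := le_trans hlamq (lam_anti 1 q le_rfl hq1 le_rfl)
  set M : ℝ := (lam 1 + 1) ^ 2 + 1 with hMdef
  have hM : 0 < M := by positivity
  set ε : ℝ := min (c / 2) (min 1 (min (c ^ 2 / 32) ((c ^ 2 / 4) ^ 2 / M / 2))) with hεdef
  have hε : 0 < ε := by
    apply lt_min (by linarith)
    apply lt_min one_pos
    apply lt_min (by positivity) (by positivity)
  have E1 : ∀ᶠ n in atTop, δ n < ε := hδ.eventually_lt_const hε
  have E2 : ∀ᶠ n in atTop, cc n < ε := hcc.eventually_lt_const hε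
  have E3 : ∀ᶠ n in atTop, δ n ^ 2 / cc n < 1 := hratio.eventually_lt_const one_pos
  filter_upwards [E1, E2, E3] with n h1 h2 h3
  intro j hj1 hjp1 hjq
  -- basic bounds
  have hd0 : 0 ≤ δ n := le_trans (abs_nonneg _) (happrox n 1 le_rfl (by omega))
  have hdc : δ n < c / 2 := lt_of_lt_of_le h1 (min_le_left _ _)
  have hd1 : δ n ≤ 1 := le_of_lt (lt_of_lt_of_le h1 ((min_le_right _ _).trans (min_le_left _ _)))
  have he1 : cc n ≤ 1 := le_of_lt (lt_of_lt_of_le h2 ((min_le_right _ _).trans (min_le_left _ _)))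
  have hec : cc n < c ^ 2 / 32 :=
    lt_of_lt_of_le h2 ((min_le_right _ _).trans ((min_le_right _ _).trans (min_le_left _ _)))
  have hεM : ε ≤ (c ^ 2 / 4) ^ 2 / M / 2 :=
    (min_le_right _ _).trans ((min_le_right _ _).trans (min_le_right _ _))
  have hd2e : δ n ^ 2 ≤ cc n := le_of_lt ((div_lt_one (hccpos n)).mp h3)
  have hsum : δ n ^ 2 + cc n < (c ^ 2 / 4) ^ 2 / M := by
    have hδ2 : δ n ^ 2 ≤ δ n := by nlinarith
    have := lt_of_lt_of_le h1 hεM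
    have := lt_of_lt_of_le h2 hεM
    linarith
  have hep : 0 < cc n := hccpos n
  -- key estimates at q
  have hAq : c / 2 ≤ lamhat n q := by
    have h := abs_le.mp (happrox n q hq1 (by omega))
    linarith [h.1]
  have hB : lamhat n (q + 1) ≤ δ n := by
    have h0 : lam (q + 1) = 0 := hzero (q + 1) (by omega) (by omega)
    have h := happrox n (q + 1) (by omega) (by omega)
    rw [h0, sub_zero] at h
    exact le_trans (le_abs_self _) h
  have hBnn : 0 ≤ lamhat n (q + 1) := hhatnn n (q + 1) (by omega) (by omega)
  have hdenq : 0 < lamhat n q ^ 2 + cc n := by positivity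
  have hdenj : 0 < lamhat n j ^ 2 + cc n := by positivity
  rw [div_lt_div_iff₀ hdenq hdenj]
  rcases lt_or_gt_of_ne hjq with hlt | hgt
  · -- case j < q
    have hNj : c / 2 ≤ lamhat n (j + 1) :=
      le_trans hAq (hat_anti n (j + 1) q (by omega) (by omega) (by omega))
    have hDjnn : 0 ≤ lamhat n j := hhatnn n j hj1 (by omega)
    have hDj : lamhat n j ≤ lam 1 + 1 := by
      have h := abs_le.mp (happrox n j hj1 (by omega))
      have hlamj : lam j ≤ lam 1 := lam_anti 1 j le_rfl hj1 (by omega)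
      linarith [h.2]
    have l1 : lamhat n (q + 1) ^ 2 + cc n ≤ δ n ^ 2 + cc n := by
      nlinarith [pow_le_pow_left₀ hBnn hB 2]
    have l2 : lamhat n j ^ 2 + cc n ≤ M := by
      have h := pow_le_pow_left₀ hDjnn hDj 2
      rw [hMdef]; linarith
    have lhs_le : (lamhat n (q + 1) ^ 2 + cc n) * (lamhat n j ^ 2 + cc n)
        ≤ (δ n ^ 2 + cc n) * M :=
      mul_le_mul l1 l2 (by positivity) (by positivity)
    have l3 : (δ n ^ 2 + cc n) * M < (c ^ 2 / 4) ^ 2 := by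
      have h := mul_lt_mul_of_pos_right hsum hM
      rwa [div_mul_cancel₀ _ (ne_of_gt hM)] at h
    have l4 : (c ^ 2 / 4) ^ 2 ≤ (lamhat n (j + 1) ^ 2 + cc n) * (lamhat n q ^ 2 + cc n) := by
      have a1 : c ^ 2 / 4 ≤ lamhat n (j + 1) ^ 2 + cc n := by
        nlinarith [mul_le_mul hNj hNj (by linarith : (0:ℝ) ≤ c / 2) (by linarith)]
      have a2 : c ^ 2 / 4 ≤ lamhat n q ^ 2 + cc n := by
        nlinarith [mul_le_mul hAq hAq (by linarith : (0:ℝ) ≤ c / 2) (by linarith)]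
      have := mul_le_mul a1 a2 (by positivity) (by positivity)
      calc (c ^ 2 / 4) ^ 2 = (c ^ 2 / 4) * (c ^ 2 / 4) := by ring
        _ ≤ _ := this
    exact lhs_le.trans_lt (l3.trans_le l4)
  · -- case j > q
    have hj1p : j + 1 ≤ p := by omega
    have hxj : lamhat n j ≤ δ n := by
      have h0 : lam j = 0 := hzero j hgt (by omega)
      have h := happrox n j hj1 (by omega)
      rw [h0, sub_zero] at h
      exact le_trans (le_abs_self _) h
    have hxj1 : lamhat n (j + 1) ≤ δ n := by
      have h0 : lam (j + 1) = 0 := hzero (j + 1) (by omega) hj1p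
      have h := happrox n (j + 1) (by omega) hj1p
      rw [h0, sub_zero] at h
      exact le_trans (le_abs_self _) h
    have hxjnn : 0 ≤ lamhat n j := hhatnn n j hj1 (by omega)
    have hxj1nn : 0 ≤ lamhat n (j + 1) := hhatnn n (j + 1) (by omega) hj1p
    have lhs_le : (lamhat n (q + 1) ^ 2 + cc n) * (lamhat n j ^ 2 + cc n)
        ≤ (2 * cc n) * (2 * cc n) := by
      have l1 : lamhat n (q + 1) ^ 2 + cc n ≤ 2 * cc n := by
        nlinarith [pow_le_pow_left₀ hBnn hB 2]
      have l2 : lamhat n j ^ 2 + cc n ≤ 2 * cc n := by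
        nlinarith [pow_le_pow_left₀ hxjnn hxj 2]
      exact mul_le_mul l1 l2 (by positivity) (by linarith)
    have rhs_ge : cc n * (c ^ 2 / 4) ≤ (lamhat n (j + 1) ^ 2 + cc n) * (lamhat n q ^ 2 + cc n) := by
      have a1 : cc n ≤ lamhat n (j + 1) ^ 2 + cc n := by nlinarith [sq_nonneg (lamhat n (j + 1))]
      have a2 : c ^ 2 / 4 ≤ lamhat n q ^ 2 + cc n := by
        nlinarith [mul_le_mul hAq hAq (by linarith : (0:ℝ) ≤ c / 2) (by linarith)]
      exact mul_le_mul a1 a2 (by positivity) (by nlinarith)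
    have key : (2 * cc n) * (2 * cc n) < cc n * (c ^ 2 / 4) := by
      nlinarith [mul_lt_mul_of_pos_left hec hep, mul_pos hep (pow_pos hc 2)]
    linarith
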